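/- Let κ be an infinite cardinal with κ^{<κ} = κ, ψ a sentence of Σ¹₁(L_{κ⁺κ}) (i.e., of the form ∃R̄ φ(R̄) where R̄ is a set of ≤ κ new relation symbols and φ(R̄) ∈ L_{κ⁺κ} in the expanded language), and F a fragment of L_{κ⁺κ}. Then X^ψ_F = {i_F(𝔄) : 𝔄 ∈ Mod_κ(ψ)} is a κ-analytic subset of the generalized Cantor space ^F2, where Mod_κ(ψ) is the set of models of ψ with domain κ. -/

import Mathlib

noncomputable section

open Cardinal Set

/-- The index type: a well-ordered set of order type (the initial ordinal of) `κ`. -/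
abbrev Idx (κ : Cardinal.{0}) : Type := κ.ord.ToType

/-- The generalized Baire space `^κκ` (as a plain function type). -/
abbrev GBPt (κ : Cardinal.{0}) : Type := Idx κ → Idx κ

/-- An element of `^{<κ}κ`: a sequence of length `len < κ`. -/
structure PSeq (κ : Cardinal.{0}) : Type where
  len : Idx κ
  val : ∀ i : Idx κ, i < len → Idx κ

namespace PSeq

/-- `p ⊆ q` for partial sequences: `q` extends `p`. -/
def le {κ : Cardinal.{0}} (p q : PSeq κ) : Prop :=
  ∃ h : p.len ≤ q.len, ∀ i (hi : i < p.len), q.val i (lt_of_lt_of_le hi h) = p.val i hi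

end PSeq

/-- The basic open set `N_p = {x ∈ ^κκ : p ⊆ x}`. -/
def Nbhd {κ : Cardinal.{0}} (p : PSeq κ) : Set (GBPt κ) :=
  {x | ∀ i (hi : i < p.len), x i = p.val i hi}

/-- The κ-Baire topology on `^κκ`, generated by the sets `N_p`. -/
def kBaire (κ : Cardinal.{0}) : TopologicalSpace (GBPt κ) :=
  TopologicalSpace.generateFrom (Set.range (Nbhd (κ := κ)))

/-- The product topology `τ_p` on `^κκ` (κ discrete). -/
def tauP (κ : Cardinal.{0}) : TopologicalSpace (GBPt κ) :=
  @Pi.topologicalSpace (Idx κ) (fun _ => Idx κ) (fun _ => ⊥)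

/-- The generalized Cantor space `^κ2`. -/
abbrev GCPt (κ : Cardinal.{0}) : Type := Idx κ → Bool

/-- A binary sequence of length `< κ`. -/
structure PSeq2 (κ : Cardinal.{0}) : Type where
  len : Idx κ
  val : ∀ i : Idx κ, i < len → Bool

def Nbhd2 {κ : Cardinal.{0}} (p : PSeq2 κ) : Set (GCPt κ) :=
  {x | ∀ i (hi : i < p.len), x i = p.val i hi}

/-- The topology of the generalized Cantor space `^κ2`. -/
def kCantor (κ : Cardinal.{0}) : TopologicalSpace (GCPt κ) :=
  TopologicalSpace.generateFrom (Set.range (Nbhd2 (κ := κ)))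

/-- Restriction `x ↾ α ∈ ^{<κ}κ` of `x ∈ ^κκ`. -/
def restr {κ : Cardinal.{0}} (x : GBPt κ) (α : Idx κ) : PSeq κ :=
  ⟨α, fun i _ => x i⟩

/-- A splitting node of a tree `T ⊆ ^{<κ}κ`. -/
def Splits {κ : Cardinal.{0}} (T : Set (PSeq κ)) (q : PSeq κ) : Prop :=
  ∃ q₀ ∈ T, ∃ q₁ ∈ T, q.le q₀ ∧ q.le q₁ ∧ ¬ q₀.le q₁ ∧ ¬ q₁.le q₀

/-- A κ-perfect tree: a nonempty subtree of `^{<κ}κ` closed under initial segments,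
whose splitting nodes are cofinal, and which is `<κ`-closed. -/
def IsPerfectTree (κ : Cardinal.{0}) (T : Set (PSeq κ)) : Prop :=
  T.Nonempty ∧
  (∀ p ∈ T, ∀ β : Idx κ, ∀ h : β ≤ p.len,
      (⟨β, fun i hi => p.val i (lt_of_lt_of_le hi h)⟩ : PSeq κ) ∈ T) ∧
  (∀ p ∈ T, ∃ q ∈ T, p.le q ∧ Splits T q) ∧
  (∀ β : Ordinal, β < κ.ord → ∀ f : ∀ i : Ordinal, i < β → PSeq κ,
      (∀ i hi, f i hi ∈ T) →
      (∀ i hi j hj, i ≤ j → (f i hi).le (f j hj)) →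
      ∃ q ∈ T, ∀ i hi, (f i hi).le q)

/-- The set of κ-branches of a tree `T ⊆ ^{<κ}κ`. -/
def branches {κ : Cardinal.{0}} (T : Set (PSeq κ)) : Set (GBPt κ) :=
  {x | ∀ α : Idx κ, restr x α ∈ T}

/-- A κ-perfect subset of `^κκ`: the set of κ-branches of a κ-perfect tree. -/
def KPerfect (κ : Cardinal.{0}) (Y : Set (GBPt κ)) : Prop :=
  ∃ T : Set (PSeq κ), IsPerfectTree κ T ∧ Y = branches T

/-- A κ-analytic subset of `^κκ`: a continuous image of a closed subset of `^κκ`. -/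
def KAnalytic (κ : Cardinal.{0}) (X : Set (GBPt κ)) : Prop :=
  ∃ C : Set (GBPt κ), @IsClosed _ (kBaire κ) C ∧
    ∃ f : GBPt κ → GBPt κ, @Continuous _ _ (kBaire κ) (kBaire κ) f ∧ X = f '' C

/-- `I` is a κ⁺-complete non-principal ideal on the set `B`. -/
structure IsKIdeal {α : Type} (κ : Cardinal.{0}) (B : Set α) (I : Set (Set α)) : Prop where
  subset_base : ∀ A ∈ I, A ⊆ B
  mono : ∀ A ∈ I, ∀ A' : Set α, A' ⊆ A → A' ∈ I
  complete : ∀ f : Idx κ → Set α, (∀ i, f i ∈ I) → (⋃ i, f i) ∈ I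
  nonprincipal : ∀ b ∈ B, ({b} : Set α) ∈ I
  proper : B ∉ I

/-- `I⁺`, the `I`-positive subsets of `B`. -/
def IPos {α : Type} (B : Set α) (I : Set (Set α)) : Set (Set α) :=
  {A | A ⊆ B ∧ A ∉ I}

/-- `K` is closed under lower bounds of descending sequences of length `< κ`. -/
def ChainClosed {α : Type} (κ : Cardinal.{0}) (K : Set (Set α)) : Prop :=
  ∀ β : Ordinal, β < κ.ord → ∀ f : ∀ i : Ordinal, i < β → Set α,
    (∀ i hi, f i hi ∈ K) →
    (∀ i hi j hj, i ≤ j → f j hj ⊆ f i hi) →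
    ∃ C ∈ K, ∀ i hi, C ⊆ f i hi

/-- The hypothesis `I⁻κ`: there is a κ⁺-complete normal non-principal ideal `I` on κ⁺
whose positive sets contain a dense subset `K` closed under lower bounds of
`<κ`-descending sequences. -/
def IminusHyp (κ : Cardinal.{0}) : Prop :=
  ∃ I : Set (Set (Idx (Order.succ κ))),
    IsKIdeal κ Set.univ I ∧
    (∀ f : Idx (Order.succ κ) → Set (Idx (Order.succ κ)), (∀ i, f i ∈ I) →
      {a | ∃ b, b < a ∧ a ∈ f b} ∈ I) ∧
    ∃ K ⊆ IPos Set.univ I,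
      (∀ A ∈ IPos Set.univ I, ∃ C ∈ K, C ⊆ A) ∧ ChainClosed κ K

/-- Closed unbounded subsets of the index set. -/
def IsClub' {κ : Cardinal.{0}} (C : Set (Idx κ)) : Prop :=
  (∀ a : Idx κ, ∃ b ∈ C, a < b) ∧
  (∀ a : Idx κ, (C ∩ Iio a).Nonempty → IsLUB (C ∩ Iio a) a → a ∈ C)

def IsStationary' {κ : Cardinal.{0}} (S : Set (Idx κ)) : Prop :=
  ∀ C : Set (Idx κ), IsClub' C → (S ∩ C).Nonempty

/-- The diamond principle `◊_κ`. -/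
def DiamondK (κ : Cardinal.{0}) : Prop :=
  ∃ A : Idx κ → Set (Idx κ), (∀ i, A i ⊆ Iio i) ∧
    ∀ S : Set (Idx κ), IsStationary' {i | S ∩ Iio i = A i}

/-- The product topology on `ⁿ(^κκ)`. -/
def nTop (κ : Cardinal.{0}) (n : ℕ) : TopologicalSpace (Fin n → GBPt κ) :=
  @Pi.topologicalSpace (Fin n) (fun _ => GBPt κ) (fun _ => kBaire κ)

/-- The n-fold product `ⁿX`. -/
def nProdIn (κ : Cardinal.{0}) (n : ℕ) (X : Set (GBPt κ)) : Set (Fin n → GBPt κ) :=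
  {x | ∀ i, x i ∈ X}

/-- `R` is a `Σ⁰₂(κ)` (i.e. `F_σ(κ)`) n-ary relation on `X`:
a union of at most κ many relatively closed subsets of `ⁿX`. -/
def FsigmaOn (κ : Cardinal.{0}) (n : ℕ) (X : Set (GBPt κ)) (R : Set (Fin n → GBPt κ)) : Prop :=
  R ⊆ nProdIn κ n X ∧
  ∃ f : Idx κ → Set (Fin n → GBPt κ), (∀ i, @IsClosed _ (nTop κ n) (f i)) ∧
    R = (⋃ i, f i) ∩ nProdIn κ n X

/-- `Y` is `R`-independent: no tuple of pairwise distinct elements of `Y` lies in `R`. -/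
def RIndep (κ : Cardinal.{0}) (n : ℕ) (R : Set (Fin n → GBPt κ)) (Y : Set (GBPt κ)) : Prop :=
  ∀ y : Fin n → GBPt κ, (∀ i, y i ∈ Y) → Function.Injective y → y ∉ R

/-- Binary version of independence. -/
def RIndep2 (κ : Cardinal.{0}) (R : Set (GBPt κ × GBPt κ)) (Y : Set (GBPt κ)) : Prop :=
  ∀ x ∈ Y, ∀ y ∈ Y, x ≠ y → (x, y) ∉ R

/-- `C` is κ-compact (in the topology `τ`): every open cover has a subcover of size `< κ`. -/
def KCompactIn {α : Type u} (κ : Cardinal.{0}) (τ : TopologicalSpace α) (C : Set α) : Prop :=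
  ∀ 𝒰 : Set (Set α), (∀ U ∈ 𝒰, @IsOpen _ τ U) → C ⊆ ⋃₀ 𝒰 →
    ∃ 𝒱 ⊆ 𝒰, Cardinal.mk 𝒱 < Cardinal.lift.{u} κ ∧ C ⊆ ⋃₀ 𝒱

/-- `C` is `K_κ`: a union of at most κ many κ-compact sets. -/
def KKappaIn {α : Type u} (κ : Cardinal.{0}) (τ : TopologicalSpace α) (C : Set α) : Prop :=
  ∃ f : Idx κ → Set α, (∀ i, KCompactIn κ τ (f i)) ∧ C = ⋃ i, f i

end

/-! ## Infinitary logic `L_{κ⁺κ}` over a relational language -/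

/-- A relational first-order language (finitary relation symbols only). -/
structure RelLang : Type 1 where
  Sym : Type
  ar : Sym → ℕ

/-- Formulas of `L_{κ⁺κ}` over the relational language `L`, with variables `v_i`, `i ∈ κ`:
atomic formulas, negation, conjunctions of at most κ many formulas, and existential
quantification over `< κ` many variables. -/
inductive Fml (L : RelLang) (κ : Cardinal.{0}) : Type 1
  | eq : Idx κ → Idx κ → Fml L κ
  | rel (R : L.Sym) (v : Fin (L.ar R) → Idx κ) : Fml L κ
  | not (φ : Fml L κ) : Fml L κ
  | conj (ι : Type) (hι : Cardinal.mk ι ≤ κ) (f : ι → Fml L κ) : Fml L κ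
  | ex (V : Set (Idx κ)) (hV : Cardinal.mk V < κ) (φ : Fml L κ) : Fml L κ

/-- An `L`-structure with domain `κ`. -/
def Struc (L : RelLang) (κ : Cardinal.{0}) : Type :=
  ∀ R : L.Sym, (Fin (L.ar R) → Idx κ) → Prop

/-- Satisfaction `M ⊨ φ[a]` for a valuation `a ∈ ^κκ`. -/
def Sat {L : RelLang} {κ : Cardinal.{0}} (M : Struc L κ) :
    Fml L κ → (Idx κ → Idx κ) → Prop
  | .eq i j, a => a i = a j
  | .rel R v, a => M R (fun k => a (v k))
  | .not φ, a => ¬ Sat M φ a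
  | .conj _ _ f, a => ∀ t, Sat M (f t) a
  | .ex V _ φ, a => ∃ b : Idx κ → Idx κ, (∀ i, i ∉ V → b i = a i) ∧ Sat M φ b

/-- `s_h φ`: simultaneous substitution of `v_{h(i)}` for `v_i`. -/
def Fml.subst {L : RelLang} {κ : Cardinal.{0}} (h : Idx κ → Idx κ) :
    Fml L κ → Fml L κ
  | .eq i j => .eq (h i) (h j)
  | .rel R v => .rel R (h ∘ v)
  | .not φ => .not (φ.subst h)
  | .conj ι hι f => .conj ι hι (fun t => (f t).subst h)
  | .ex V hV φ => .ex (h '' V) (lt_of_le_of_lt Cardinal.mk_image_le hV) (φ.subst h)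

/-- The subformula relation. -/
inductive Subf {L : RelLang} {κ : Cardinal.{0}} : Fml L κ → Fml L κ → Prop
  | refl (φ : Fml L κ) : Subf φ φ
  | not {φ ψ : Fml L κ} : Subf ψ φ → Subf ψ (.not φ)
  | conj {ι hι f ψ} (t : ι) : Subf ψ (f t) → Subf ψ (.conj ι hι f)
  | ex {V hV φ ψ} : Subf ψ φ → Subf ψ (.ex V hV φ)

/-- The free variables of a formula. -/
def Fml.freeVars {L : RelLang} {κ : Cardinal.{0}} : Fml L κ → Set (Idx κ)
  | .eq i j => {i, j}
  | .rel _ v => Set.range v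
  | .not φ => φ.freeVars
  | .conj _ _ f => ⋃ t, (f t).freeVars
  | .ex V _ φ => φ.freeVars \ V

/-- Atomic formulas. -/
def Fml.IsAtomic {L : RelLang} {κ : Cardinal.{0}} (φ : Fml L κ) : Prop :=
  (∃ i j, φ = .eq i j) ∨ ∃ R v, φ = .rel R v

/-- A fragment of `L_{κ⁺κ}`: a κ-sized set of `L_{κ⁺κ}`-formulas (in particular each
formula has `< κ` free variables) containing all atomic formulas and closed under
negation, subformulas and substitution of variables. -/
structure IsFragment {L : RelLang} (κ : Cardinal.{0}) (F : Set (Fml L κ)) : Prop where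
  card : Cardinal.mk F = Cardinal.lift.{1} κ
  atom : ∀ φ : Fml L κ, φ.IsAtomic → φ ∈ F
  neg : ∀ φ ∈ F, Fml.not φ ∈ F
  subf : ∀ φ ∈ F, ∀ ψ, Subf ψ φ → ψ ∈ F
  substc : ∀ φ ∈ F, ∀ h : Idx κ → Idx κ, φ.subst h ∈ F
  smallFree : ∀ φ ∈ F, Cardinal.mk φ.freeVars < κ

/-- The set `Mod_κ(φ, a)` of models of `φ` under the valuation `a`. -/
def ModSet {L : RelLang} {κ : Cardinal.{0}} (φ : Fml L κ) (a : Idx κ → Idx κ) :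
    Set (Struc L κ) := {M | Sat M φ a}

/-- The topology `t_F` on `Mod_κ(L)`: generated by intersections of `< κ` many of the
sets `Mod_κ(φ, a)`, `φ ∈ F`, `a ∈ ^κκ`. -/
def tF {L : RelLang} (κ : Cardinal.{0}) (F : Set (Fml L κ)) :
    TopologicalSpace (Struc L κ) :=
  TopologicalSpace.generateFrom
    {s | ∃ (ι : Type) (φ : ι → Fml L κ) (a : ι → (Idx κ → Idx κ)),
      Cardinal.mk ι < κ ∧ (∀ t, φ t ∈ F) ∧ s = ⋂ t, ModSet (φ t) (a t)}

/-- The map `i_F : Mod_κ(L) → ^F2`. -/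
def iF {L : RelLang} (κ : Cardinal.{0}) (F : Set (Fml L κ)) (M : Struc L κ) :
    F → Prop :=
  fun φ => Sat M φ.1 id

/-- The generalized Cantor space topology on `^F2`: basic open sets are determined
by `< κ` many coordinates. -/
def cantF {L : RelLang} (κ : Cardinal.{0}) (F : Set (Fml L κ)) :
    TopologicalSpace (F → Prop) :=
  TopologicalSpace.generateFrom
    {s | ∃ (P : Set F) (g : ∀ p : P, Prop),
      Cardinal.mk P < Cardinal.lift.{1} κ ∧ s = {x | ∀ p : P, x p.1 = g p}}

/-- `X` is `G_δ(κ)` w.r.t. the topology `τ`: an intersection of at most κ many opens. -/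
def GdeltaIn {α : Type u} (κ : Cardinal.{0}) (τ : TopologicalSpace α) (X : Set α) : Prop :=
  ∃ U : Idx κ → Set α, (∀ i, @IsOpen _ τ (U i)) ∧ X = ⋂ i, U i

/-- `X` is κ-analytic w.r.t. the topology `τ`: a continuous image of a closed
subset of the κ-Baire space. -/
def KAnalyticIn {α : Type u} (κ : Cardinal.{0}) (τ : TopologicalSpace α) (X : Set α) : Prop :=
  ∃ C : Set (GBPt κ), @IsClosed _ (kBaire κ) C ∧
    ∃ f : GBPt κ → α, @Continuous _ _ (kBaire κ) τ f ∧ X = f '' C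

/-- Sum of two relational languages (adding new symbols). -/
def RelLang.sum (L L' : RelLang) : RelLang :=
  ⟨L.Sym ⊕ L'.Sym, Sum.elim L.ar L'.ar⟩

/-- The set of models (with domain κ) of the `Σ¹₁(L_{κ⁺κ})` sentence `∃ R̄ φ(R̄)`,
where `φ` is an `L_{κ⁺κ}`-sentence in the language `L.sum L₂` expanded by the
new symbols `L₂`. -/
def ModPsi {L : RelLang} {κ : Cardinal.{0}} (L₂ : RelLang) (φ : Fml (L.sum L₂) κ) :
    Set (Struc L κ) :=
  {M | ∃ M' : Struc (L.sum L₂) κ,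
    (∀ (R : L.Sym) (v : Fin (L.ar R) → Idx κ), M' (Sum.inl R) v = M R v) ∧
    Sat M' φ id}

/-- The set of injective elements of `^κκ`. -/
def InjK (κ : Cardinal.{0}) : Set (GBPt κ) := {h | Function.Injective h}

/-- `A` is `(F,H)`-elementarily embeddable into `B`. -/
def FHEmb {L : RelLang} {κ : Cardinal.{0}} (F : Set (Fml L κ)) (H : Set (GBPt κ))
    (A B : Struc L κ) : Prop :=
  ∃ h ∈ H, ∀ φ ∈ F, ∀ a : Idx κ → Idx κ, Sat A φ a ↔ Sat B φ (h ∘ a)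

/-- A κ-perfect subset of the space `(α, τ)`: the range of a continuous injection
of the generalized Cantor space `^κ2`. -/
def PerfectIn {α : Type u} (κ : Cardinal.{0}) (τ : TopologicalSpace α) (Y : Set α) : Prop :=
  ∃ r : GCPt κ → α, @Continuous _ _ (kCantor κ) τ r ∧ Function.Injective r ∧
    Y = Set.range r

/-- The κ-Borel sets of the space `(α, τ)`. -/
inductive KBorel {α : Type u} (κ : Cardinal.{0}) (τ : TopologicalSpace α) : Set α → Prop
  | basic (s : Set α) : @IsOpen _ τ s → KBorel κ τ s
  | compl (s : Set α) : KBorel κ τ s → KBorel κ τ sᶜ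
  | iUnion (f : Idx κ → Set α) : (∀ i, KBorel κ τ (f i)) → KBorel κ τ (⋃ i, f i)

/-!
Truth in `L_{κ⁺κ}` is not a closed condition, but it becomes one once witnesses are added.
A point of `^κκ` codes, on disjoint blocks of coordinates, the atomic diagram of an expansion
`M'`, a truth certificate for `φ` in `M'`, and one for every `χ ∈ F` in the reduct: truth values
for all instances of subformulas, plus a false conjunct for every false conjunction and a witness
tuple for every true existential. Each local consistency condition reads fewer than `κ`
coordinates, hence is clopen because `κ` is regular (a consequence of `κ^{<κ} = κ`), so the codes
form a closed set. Reading off the truth values of the `χ ∈ F` is continuous and maps this closed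
set onto `X^ψ_F`.
-/

section

open Cardinal Set Topology

section Cardinality

theorem mk_idx (κ : Cardinal.{0}) : #(Idx κ) = κ := by
  simp [Idx]

variable {κ : Cardinal.{0}}

theorem isRegular_of_powerlt_eq_self (hκ : ℵ₀ ≤ κ) (hκκ : κ ^< κ = κ) : κ.IsRegular :=
  ⟨hκ, not_lt.1 fun hcof =>
    ((lt_power_cof_ord hκ).trans_le ((le_powerlt κ hcof).trans_eq hκκ)).false⟩

theorem exists_forall_lt_of_mk_lt (hreg : κ.IsRegular) {D : Set (Idx κ)} (hD : #D < κ) :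
    ∃ α, ∀ i ∈ D, i < α :=
  not_isCofinal_iff.1 fun h => (Order.cof_le h).not_gt <| by
    rwa [Ordinal.cof_toType, hreg.cof_ord]

theorem mk_sum_le_of_le {α β : Type u} {c : Cardinal.{u}} (hc : ℵ₀ ≤ c) (hα : #α ≤ c)
    (hβ : #β ≤ c) : #(α ⊕ β) ≤ c := by
  rw [← add_def]
  exact add_le_of_le hc hα hβ

theorem mk_prod_le_of_le {α β : Type u} {c : Cardinal.{u}} (hc : ℵ₀ ≤ c) (hα : #α ≤ c)
    (hβ : #β ≤ c) : #(α × β) ≤ c := by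
  rw [← mul_def]
  exact mul_le_of_le hc hα hβ

theorem mk_sigma_le_of_le {ι : Type u} {β : ι → Type u} {c : Cardinal.{u}} (hc : ℵ₀ ≤ c)
    (hι : #ι ≤ c) (hβ : ∀ i, #(β i) ≤ c) : #(Σ i, β i) ≤ c := by
  rw [mk_sigma]
  exact (sum_le_sum _ _ hβ).trans ((sum_const' _ c).trans_le (mul_le_of_le hc hι le_rfl))

theorem mk_fun_idx_le (hκκ : κ ^< κ = κ) {V : Type} (hV : #V < κ) : #(V → Idx κ) ≤ κ := by
  rw [← power_def, mk_idx]
  exact (le_powerlt κ hV).trans_eq hκκ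

theorem mk_insert_lt {α : Type u} {c : Cardinal.{u}} (hc : ℵ₀ ≤ c) {s : Set α} (hs : #s < c)
    (a : α) : #(insert a s : Set α) < c :=
  mk_insert_le.trans_lt (add_lt_of_lt hc hs (one_lt_aleph0.trans_le hc))

theorem nontrivial_idx (hκ : ℵ₀ ≤ κ) : Nontrivial (Idx κ) :=
  one_lt_iff_nontrivial.1 ((mk_idx κ).symm ▸ one_lt_aleph0.trans_le hκ)

end Cardinality

theorem isClosed_setOf_forall {X ι : Type*} [TopologicalSpace X] {p : ι → X → Prop}
    (h : ∀ i, IsClosed {x | p i x}) : IsClosed {x | ∀ i, p i x} := by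
  simpa only [ofPred_forall] using isClosed_iInter h

section KBaire

variable {κ : Cardinal.{0}}

theorem isOpen_setOf_of_dependsOn (hreg : κ.IsRegular) {P : GBPt κ → Prop} {D : Set (Idx κ)}
    (hD : #D < κ) (hP : DependsOn P D) : IsOpen[kBaire κ] {x | P x} := by
  let _ := kBaire κ
  obtain ⟨α, hα⟩ := exists_forall_lt_of_mk_lt hreg hD
  have : {x | P x} = ⋃ x ∈ {x | P x}, Nbhd (restr x α) := by
    refine Subset.antisymm (fun x hx => mem_biUnion hx fun _ _ => rfl) ?_
    refine iUnion₂_subset fun x hx y hy => ?_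
    show P y
    rw [← hP fun i hi => (hy i (hα i hi)).symm]
    exact hx
  rw [this]
  exact isOpen_biUnion fun x _ => TopologicalSpace.isOpen_generateFrom_of_mem ⟨_, rfl⟩

theorem isClosed_setOf_of_dependsOn (hreg : κ.IsRegular) {P : GBPt κ → Prop} {D : Set (Idx κ)}
    (hD : #D < κ) (hP : DependsOn P D) : IsClosed[kBaire κ] {x | P x} := by
  let _ := kBaire κ
  refine isOpen_compl_iff.1 (isOpen_setOf_of_dependsOn hreg hD (P := fun x => ¬ P x) ?_)
  intro x y h
  simp only [hP h]

theorem isClosed_setOf_of_dependsOn_finite (hreg : κ.IsRegular) {P : GBPt κ → Prop}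
    {D : Set (Idx κ)} (hD : D.Finite) (hP : DependsOn P D) : IsClosed[kBaire κ] {x | P x} :=
  isClosed_setOf_of_dependsOn hreg (hD.lt_aleph0.trans_le hreg.aleph0_le) hP

end KBaire

theorem exists_embedding_idx {κ : Cardinal.{0}} {ι : Type} (hι : #ι ≤ κ) :
    Nonempty (ι ↪ Idx κ) := by
  rwa [← le_def, mk_idx]

noncomputable def embeddingIdx {κ : Cardinal.{0}} {ι : Type} (hι : #ι ≤ κ) : ι ↪ Idx κ :=
  (exists_embedding_idx hι).some

theorem sat_ex_iff {L : RelLang} {κ : Cardinal.{0}} {M : Struc L κ} {V : Set (Idx κ)}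
    {hV : #V < κ} {ψ : Fml L κ} {a : Idx κ → Idx κ} :
    Sat M (.ex V hV ψ) a ↔ ∃ v : V → Idx κ, Sat M ψ (Function.extend Subtype.val v a) := by
  refine ⟨fun ⟨b, hb, hsat⟩ => ⟨fun i => b i, ?_⟩, fun ⟨v, hsat⟩ => ⟨_, fun i hi => ?_, hsat⟩⟩
  · convert hsat
    funext i
    by_cases hi : i ∈ V
    · exact Subtype.val_injective.extend_apply _ _ ⟨i, hi⟩
    · rw [Function.extend_apply' _ _ _ fun ⟨j, hj⟩ => hi (hj ▸ j.2), hb i hi]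
  · exact Function.extend_apply' _ _ _ fun ⟨j, hj⟩ => hi (hj ▸ j.2)

noncomputable def encodeProp {κ : Cardinal.{0}} (z o : Idx κ) (p : Prop) : Idx κ := by
  classical exact if p then o else z

theorem encodeProp_ne_iff {κ : Cardinal.{0}} {z o : Idx κ} (h : o ≠ z) (p : Prop) :
    encodeProp z o p ≠ z ↔ p := by
  unfold encodeProp
  split_ifs with hp <;> simp [hp, h]

abbrev Atom (L : RelLang) (κ : Cardinal.{0}) : Type := Σ R : L.Sym, Fin (L.ar R) → Idx κ

theorem mk_atom_le {L : RelLang} {κ : Cardinal.{0}} (hκ : ℵ₀ ≤ κ) (hL : #L.Sym ≤ κ) :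
    #(Atom L κ) ≤ κ :=
  mk_sigma_le_of_le hκ hL fun R => by
    rw [← power_def, mk_idx, mk_fin]
    exact power_nat_le hκ

def decodeStruc {L : RelLang} {κ : Cardinal.{0}} (z : Idx κ) (atom : Atom L κ → Idx κ)
    (x : GBPt κ) : Struc L κ :=
  fun R v => x (atom ⟨R, v⟩) ≠ z

namespace Fml

variable {L : RelLang} {κ : Cardinal.{0}}

def CertIdx : Fml L κ → Type
  | .eq _ _ | .rel _ _ => Unit
  | .not ψ => Unit ⊕ ψ.CertIdx
  | .conj ι _ f => (Unit ⊕ Unit) ⊕ Σ t : ι, (f t).CertIdx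
  | .ex V _ ψ => (Unit ⊕ V) ⊕ (V → Idx κ) × ψ.CertIdx

def root : (ψ : Fml L κ) → ψ.CertIdx
  | .eq _ _ | .rel _ _ => ()
  | .not _ => .inl ()
  | .conj .. | .ex .. => .inl (.inl ())

theorem mk_certIdx_le (hκ : ℵ₀ ≤ κ) (hκκ : κ ^< κ = κ) (ψ : Fml L κ) : #ψ.CertIdx ≤ κ := by
  have hfin {α : Type} [Finite α] : #α ≤ κ := (lt_aleph0_of_finite α).le.trans hκ
  induction ψ with
  | eq | rel => exact (hfin : #Unit ≤ κ)
  | not ψ ih => exact mk_sum_le_of_le hκ hfin ih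
  | conj ι hι f ih => exact mk_sum_le_of_le hκ hfin (mk_sigma_le_of_le hκ hι ih)
  | ex V hV ψ ih =>
    exact mk_sum_le_of_le hκ (mk_sum_le_of_le hκ hfin ((mk_set_le V).trans_eq (mk_idx κ)))
      (mk_prod_le_of_le hκ (mk_fun_idx_le hκκ hV) ih)

/-- A truth certificate: a coordinate value `≠ z` codes "true". The root coordinate of `w` codes
the truth of `ψ` under `a`; the remaining coordinates hold certificates for the immediate
subformulas, together with a selector naming a false conjunct (for `conj`) or a witness tuple
(for `ex`), so that every condition reads off fewer than `κ` coordinates. -/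
def IsCert (z : Idx κ) (M : Struc L κ) :
    (ψ : Fml L κ) → (Idx κ → Idx κ) → (ψ.CertIdx → Idx κ) → Prop
  | .eq i j, a, w => (w () ≠ z ↔ a i = a j)
  | .rel R v, a, w => (w () ≠ z ↔ M R (a ∘ v))
  | .not ψ, a, w => (w (.inl ()) ≠ z ↔ w (.inr ψ.root) = z) ∧ IsCert z M ψ a (w ∘ .inr)
  | .conj _ hι f, a, w =>
      (∀ t, w (.inl (.inl ())) ≠ z → w (.inr ⟨t, (f t).root⟩) ≠ z) ∧
      (w (.inl (.inl ())) = z → ∃ t, w (.inl (.inr ())) = embeddingIdx hι t) ∧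
      (∀ t, w (.inl (.inr ())) = embeddingIdx hι t → w (.inr ⟨t, (f t).root⟩) ≠ z →
        w (.inl (.inl ())) ≠ z) ∧
      ∀ t, IsCert z M (f t) a (fun c => w (.inr ⟨t, c⟩))
  | .ex _ _ ψ, a, w =>
      (∀ v, w (.inr (v, ψ.root)) ≠ z → w (.inl (.inl ())) ≠ z) ∧
      (∀ v, (fun i => w (.inl (.inr i))) = v → w (.inl (.inl ())) ≠ z →
        w (.inr (v, ψ.root)) ≠ z) ∧
      ∀ v, IsCert z M ψ (Function.extend Subtype.val v a) (fun c => w (.inr (v, c)))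

theorem IsCert.root_ne_iff {z : Idx κ} {M : Struc L κ} {ψ : Fml L κ} {a : Idx κ → Idx κ}
    {w : ψ.CertIdx → Idx κ} (h : IsCert z M ψ a w) : w ψ.root ≠ z ↔ Sat M ψ a := by
  induction ψ generalizing a with
  | eq | rel => exact h
  | not ψ ih => exact h.1.trans (not_not.symm.trans (ih h.2).not)
  | conj ι hι f ih =>
    obtain ⟨hroot, hsel, hfalse, hsub⟩ := h
    refine ⟨fun hw t => (ih t (hsub t)).1 (hroot t hw), fun hsat hw => ?_⟩
    obtain ⟨t, ht⟩ := hsel hw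
    exact hfalse t ht ((ih t (hsub t)).2 (hsat t)) hw
  | ex V hV ψ ih =>
    obtain ⟨hwit, hroot, hsub⟩ := h
    refine ⟨fun hw => sat_ex_iff.2 ⟨_, (ih (hsub _)).1 (hroot _ rfl hw)⟩, fun hsat => ?_⟩
    obtain ⟨v, hv⟩ := sat_ex_iff.1 hsat
    exact hwit v ((ih (hsub v)).2 hv)

theorem exists_isCert {z o : Idx κ} (hzo : o ≠ z) (M : Struc L κ) (ψ : Fml L κ)
    (a : Idx κ → Idx κ) : ∃ w, IsCert z M ψ a w := by
  induction ψ generalizing a with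
  | eq i j => exact ⟨fun _ => encodeProp z o (a i = a j), encodeProp_ne_iff hzo _⟩
  | rel R v => exact ⟨fun _ => encodeProp z o (M R (a ∘ v)), encodeProp_ne_iff hzo _⟩
  | not ψ ih =>
    obtain ⟨w, hw⟩ := ih a
    exact ⟨Sum.elim (fun _ => encodeProp z o (¬ Sat M ψ a)) w,
      (encodeProp_ne_iff hzo _).trans (hw.root_ne_iff.not.symm.trans not_not), hw⟩
  | conj ι hι f ih =>
    choose w hw using fun t => ih t a
    obtain ⟨sel, hsel⟩ : ∃ j : Idx κ, (∃ t, ¬ Sat M (f t) a) →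
        ∃ t, ¬ Sat M (f t) a ∧ j = embeddingIdx hι t := by
      by_cases h : ∃ t, ¬ Sat M (f t) a
      · obtain ⟨t, ht⟩ := h
        exact ⟨embeddingIdx hι t, fun _ => ⟨t, ht, rfl⟩⟩
      · exact ⟨z, fun h' => absurd h' h⟩
    refine ⟨Sum.elim (Sum.elim (fun _ => encodeProp z o (∀ t, Sat M (f t) a)) fun _ => sel)
      fun p => w p.1 p.2, fun t hroot => ?_, fun hroot => ?_, fun t hsel_t ht => ?_, hw⟩
    · exact (hw t).root_ne_iff.2 ((encodeProp_ne_iff hzo _).1 hroot t)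
    · have hbad : ∃ t, ¬ Sat M (f t) a := by
        by_contra! hall
        exact (encodeProp_ne_iff hzo _).2 hall hroot
      obtain ⟨t, -, rfl⟩ := hsel hbad
      exact ⟨t, rfl⟩
    · refine (encodeProp_ne_iff hzo _).2 (not_not.1 fun hbad => ?_)
      obtain ⟨t', ht', hsel_t'⟩ := hsel (not_forall.1 hbad)
      obtain rfl := (embeddingIdx hι).injective (hsel_t'.symm.trans hsel_t)
      exact ht' ((hw t').root_ne_iff.1 ht)
  | ex V hV ψ ih =>
    choose w hw using fun v : V → Idx κ => ih (Function.extend Subtype.val v a)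
    obtain ⟨wit, hwit⟩ : ∃ v : V → Idx κ,
        Sat M (.ex V hV ψ) a → Sat M ψ (Function.extend Subtype.val v a) := by
      by_cases h : Sat M (.ex V hV ψ) a
      · obtain ⟨v, hv⟩ := sat_ex_iff.1 h
        exact ⟨v, fun _ => hv⟩
      · exact ⟨fun _ => z, fun h' => absurd h' h⟩
    refine ⟨Sum.elim (Sum.elim (fun _ => encodeProp z o (Sat M (.ex V hV ψ) a)) wit)
      fun p => w p.1 p.2, fun v hv => ?_, ?_, hw⟩
    · exact (encodeProp_ne_iff hzo _).2 (sat_ex_iff.2 ⟨v, (hw v).root_ne_iff.1 hv⟩)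
    · rintro v rfl hroot
      exact (hw _).root_ne_iff.2 (hwit ((encodeProp_ne_iff hzo _).1 hroot))

theorem isClosed_setOf_isCert (hreg : κ.IsRegular) (z : Idx κ) (atom : Atom L κ → Idx κ)
    (ψ : Fml L κ) (a : Idx κ → Idx κ) (g : ψ.CertIdx → Idx κ) :
    IsClosed[kBaire κ] {x | IsCert z (decodeStruc z atom x) ψ a fun c => x (g c)} := by
  let _ := kBaire κ
  induction ψ generalizing a with
  | eq i j =>
    exact isClosed_setOf_of_dependsOn_finite hreg (finite_singleton (g ())) fun x y h => by
      simp [IsCert, h]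
  | rel R v =>
    exact isClosed_setOf_of_dependsOn_finite hreg ((finite_singleton (atom ⟨R, a ∘ v⟩)).insert
      (g ())) fun x y h => by simp [IsCert, decodeStruc, h]
  | not ψ ih =>
    refine IsClosed.and (isClosed_setOf_of_dependsOn_finite hreg
      ((finite_singleton (g (.inr ψ.root))).insert (g (.inl ()))) fun x y h => ?_) (ih a _)
    simp [h]
  | conj ι hι f ih =>
    simp only [IsCert]
    refine (isClosed_setOf_forall fun t => ?_).and (IsClosed.and ?_
      ((isClosed_setOf_forall fun t => ?_).and (isClosed_setOf_forall fun t => ih t a _)))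
    · exact isClosed_setOf_of_dependsOn_finite hreg
        ((finite_singleton (g (.inr ⟨t, (f t).root⟩))).insert (g (.inl (.inl ()))))
        fun x y h => by simp [h]
    · exact isClosed_setOf_of_dependsOn_finite hreg
        ((finite_singleton (g (.inl (.inr ())))).insert (g (.inl (.inl ()))))
        fun x y h => by simp [h]
    · exact isClosed_setOf_of_dependsOn_finite hreg
        (((finite_singleton (g (.inr ⟨t, (f t).root⟩))).insert (g (.inl (.inl ())))).insert
          (g (.inl (.inr ())))) fun x y h => by simp [h]
  | ex V hV ψ ih =>
    simp only [IsCert]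
    refine (isClosed_setOf_forall fun v => ?_).and
      ((isClosed_setOf_forall fun v => ?_).and (isClosed_setOf_forall fun v => ih _ _))
    · exact isClosed_setOf_of_dependsOn_finite hreg
        ((finite_singleton (g (.inl (.inl ())))).insert (g (.inr (v, ψ.root))))
        fun x y h => by simp [h]
    · have hwit : #(range fun i : V => g (.inl (.inr i))) < κ := mk_range_le.trans_lt hV
      have hD := mk_insert_lt hreg.aleph0_le
        (mk_insert_lt hreg.aleph0_le hwit (g (.inr (v, ψ.root)))) (g (.inl (.inl ())))
      exact isClosed_setOf_of_dependsOn hreg hD fun x y h => by simp [h]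

end Fml

section Coding

variable {κ : Cardinal.{0}} {L L₂ : RelLang}

abbrev CodeIdx (φ : Fml (L.sum L₂) κ) (F : Set (Fml L κ)) : Type 1 :=
  (Σ χ : F, ULift.{1} χ.1.CertIdx) ⊕ ULift.{1} (φ.CertIdx ⊕ Atom (L.sum L₂) κ)

variable {φ : Fml (L.sum L₂) κ} {F : Set (Fml L κ)}

theorem mk_codeIdx_le (hκ : ℵ₀ ≤ κ) (hκκ : κ ^< κ = κ) (hL : #L.Sym ≤ κ) (hL₂ : #L₂.Sym ≤ κ)
    (hF : #F ≤ lift.{1} κ) : #(CodeIdx φ F) ≤ lift.{1} κ := by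
  have hκ' : ℵ₀ ≤ lift.{1} κ := aleph0_le_lift.2 hκ
  refine mk_sum_le_of_le hκ' (mk_sigma_le_of_le hκ' hF fun χ => ?_) ?_ <;>
    rw [mk_uLift, lift_le]
  · exact χ.1.mk_certIdx_le hκ hκκ
  · exact mk_sum_le_of_le hκ (φ.mk_certIdx_le hκ hκκ)
      (mk_atom_le hκ (mk_sum_le_of_le hκ hL hL₂))

variable (z : Idx κ) (e : CodeIdx φ F ↪ Idx κ)

def expAtom : Atom (L.sum L₂) κ → Idx κ := fun s => e (.inr ⟨.inr s⟩)

def redAtom : Atom L κ → Idx κ := fun s => expAtom e ⟨.inl s.1, s.2⟩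

def phiCertCoord : φ.CertIdx → Idx κ := fun c => e (.inr ⟨.inl c⟩)

def fragCertCoord (χ : F) : χ.1.CertIdx → Idx κ := fun c => e (.inl ⟨χ, ⟨c⟩⟩)

def codeSet : Set (GBPt κ) :=
  {x | (∀ χ : F, χ.1.IsCert z (decodeStruc z (redAtom e) x) id fun c => x (fragCertCoord e χ c)) ∧
    φ.IsCert z (decodeStruc z (expAtom e) x) id (fun c => x (phiCertCoord e c)) ∧
    x (phiCertCoord e φ.root) ≠ z}

def decodeTheory (x : GBPt κ) : F → Prop := fun χ => x (fragCertCoord e χ χ.1.root) ≠ z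

theorem isClosed_codeSet (hreg : κ.IsRegular) : IsClosed[kBaire κ] (codeSet z e) := by
  let _ := kBaire κ
  refine (isClosed_setOf_forall fun χ : F => ?_).and
    ((Fml.isClosed_setOf_isCert hreg z _ φ id _).and ?_)
  · exact Fml.isClosed_setOf_isCert hreg z _ χ.1 id _
  · exact isClosed_setOf_of_dependsOn_finite hreg (finite_singleton (phiCertCoord e φ.root))
      fun x y h => by simp [h]

theorem continuous_decodeTheory (hreg : κ.IsRegular) :
    Continuous[kBaire κ, cantF κ F] (decodeTheory z e) := by
  rw [cantF, continuous_generateFrom_iff]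
  rintro _ ⟨P, b, hP, rfl⟩
  refine isOpen_setOf_of_dependsOn hreg (D := range fun p : P => fragCertCoord e p.1 p.1.1.root)
    ?_ fun x y h => ?_
  · exact lift_lt.1 ((mk_range_le_lift (f := fun p : P => fragCertCoord e p.1 p.1.1.root)).trans_lt
      (by rwa [lift_uzero]))
  · have hxy : ∀ p : P, x (fragCertCoord e p.1 p.1.1.root) = y (fragCertCoord e p.1 p.1.1.root) :=
      fun p => h _ (mem_range_self p)
    simp only [decodeTheory, mem_ofPred_eq, hxy]

theorem decodeTheory_image_codeSet_subset :
    decodeTheory z e '' codeSet z e ⊆ iF κ F '' ModPsi L₂ φ := by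
  rintro _ ⟨x, ⟨hfrag, hφ, hroot⟩, rfl⟩
  refine ⟨decodeStruc z (redAtom e) x,
    ⟨decodeStruc z (expAtom e) x, fun R v => rfl, hφ.root_ne_iff.1 hroot⟩, ?_⟩
  funext χ
  exact propext (hfrag χ).root_ne_iff.symm

theorem image_modPsi_subset_decodeTheory_image {o : Idx κ} (hoz : o ≠ z) :
    iF κ F '' ModPsi L₂ φ ⊆ decodeTheory z e '' codeSet z e := by
  rintro _ ⟨M, ⟨M', hred, hsat⟩, rfl⟩
  choose w hw using fun χ : F => Fml.exists_isCert hoz M χ.1 id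
  obtain ⟨wφ, hwφ⟩ := Fml.exists_isCert hoz M' φ id
  let x : GBPt κ := Function.extend e (Sum.elim (fun p => w p.1 p.2.down)
    fun u => Sum.elim wφ (fun s => encodeProp z o (M' s.1 s.2)) u.down) fun _ => z
  have hx : ∀ c, x (e c) = _ := e.injective.extend_apply _ _
  have hM' : decodeStruc z (expAtom e) x = M' := by
    funext R v
    rw [decodeStruc, expAtom, hx]
    exact propext (encodeProp_ne_iff hoz _)
  have hM : decodeStruc z (redAtom e) x = M := by
    funext R v
    rw [← hred R v, ← hM']
    rfl
  have hfrag : ∀ χ, (fun c => x (fragCertCoord e χ c)) = w χ := fun χ => funext fun c => hx _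
  have hcert : (fun c => x (phiCertCoord e c)) = wφ := funext fun c => hx _
  refine ⟨x, ⟨fun χ => ?_, ?_, ?_⟩, ?_⟩
  · rw [hM, hfrag]
    exact hw χ
  · rw [hM', hcert]
    exact hwφ
  · rw [phiCertCoord, hx]
    exact hwφ.root_ne_iff.2 hsat
  · funext χ
    rw [decodeTheory, fragCertCoord, hx]
    exact propext (hw χ).root_ne_iff

theorem kAnalyticIn_image_modPsi (hκ : ℵ₀ ≤ κ) (hκκ : κ ^< κ = κ) (hL : #L.Sym ≤ κ)
    (hL₂ : #L₂.Sym ≤ κ) (hF : #F ≤ lift.{1} κ) :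
    KAnalyticIn κ (cantF κ F) (iF κ F '' ModPsi L₂ φ) := by
  have hreg := isRegular_of_powerlt_eq_self hκ hκκ
  have := nontrivial_idx hκ
  obtain ⟨o, z, hoz⟩ := exists_pair_ne (Idx κ)
  obtain ⟨e⟩ : Nonempty (CodeIdx φ F ↪ Idx κ) := by
    rw [← lift_mk_le', mk_idx, lift_uzero]
    exact mk_codeIdx_le hκ hκκ hL hL₂ hF
  exact ⟨codeSet z e, isClosed_codeSet z e hreg, decodeTheory z e,
    continuous_decodeTheory z e hreg, (image_modPsi_subset_decodeTheory_image z e hoz).antisymm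
      (decodeTheory_image_codeSet_subset z e)⟩

end Coding

theorem Fml.sizeOf_iterate_not {L : RelLang} {κ : Cardinal.{0}} (ψ : Fml L κ) (n : ℕ) :
    sizeOf (Fml.not^[n] ψ) = n + sizeOf ψ := by
  induction n with
  | zero => simp
  | succ n ih =>
    rw [Function.iterate_succ_apply', Fml.not.sizeOf_spec, ih]
    omega

theorem IsFragment.aleph0_le {L : RelLang} {κ : Cardinal.{0}} {F : Set (Fml L κ)}
    (hF : IsFragment κ F) (hκ : κ ≠ 0) : ℵ₀ ≤ κ := by
  obtain ⟨i⟩ : Nonempty (Idx κ) := mk_ne_zero_iff.1 ((mk_idx κ).trans_ne hκ)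
  have hmem (n : ℕ) : Fml.not^[n] (.eq i i) ∈ F := by
    induction n with
    | zero => exact hF.atom _ (.inl ⟨i, i, rfl⟩)
    | succ n ih => exact Function.iterate_succ_apply' Fml.not n _ ▸ hF.neg _ ih
  have : Infinite F := .of_injective (fun n => ⟨_, hmem n⟩) fun m n h => by
    simpa [Fml.sizeOf_iterate_not] using congrArg (sizeOf ∘ Subtype.val) h
  simpa [hF.card] using aleph0_le_mk F

theorem IsFragment.isEmpty {L : RelLang} {F : Set (Fml L 0)} (hF : IsFragment 0 F) :
    IsEmpty F := by
  rw [← mk_eq_zero_iff, hF.card, lift_zero]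

theorem kAnalyticIn_of_subsingleton {α : Type u} [Nonempty α] (κ : Cardinal.{0})
    (τ : TopologicalSpace α) {X : Set α} (hX : X.Subsingleton) : KAnalyticIn κ τ X := by
  let _ := kBaire κ
  let _ : Nonempty (GBPt κ) := ⟨id⟩
  rcases hX.eq_empty_or_singleton with rfl | ⟨y, rfl⟩
  · exact ⟨∅, isClosed_empty, fun _ => Classical.arbitrary α, continuous_const,
      (image_empty _).symm⟩
  · exact ⟨univ, isClosed_univ, fun _ => y, continuous_const, by rw [image_univ, range_const]⟩

end

theorem stmt_16_general (κ : Cardinal.{0}) (hκκ : κ ^< κ = κ)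
    (L : RelLang) (hL : Cardinal.mk L.Sym ≤ κ)
    (L₂ : RelLang) (hL₂ : Cardinal.mk L₂.Sym ≤ κ)
    (φ : Fml (L.sum L₂) κ)
    (F : Set (Fml L κ)) (hF : IsFragment κ F) :
    KAnalyticIn κ (cantF κ F) (iF κ F '' ModPsi L₂ φ) := by
  rcases eq_or_ne κ 0 with rfl | hκ
  · have := hF.isEmpty
    exact kAnalyticIn_of_subsingleton _ _ Set.subsingleton_of_subsingleton
  · exact kAnalyticIn_image_modPsi (hF.aleph0_le hκ) hκκ hL hL₂ hF.card.le

/-- Corollary "models2": `X^ψ_F` is a κ-analytic subset of `^F2`. -/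
theorem stmt_16 (κ : Cardinal.{0}) (hκ : ℵ₀ ≤ κ) (hκκ : κ ^< κ = κ)
    (L : RelLang) (hL : Cardinal.mk L.Sym ≤ κ)
    (L₂ : RelLang) (hL₂ : Cardinal.mk L₂.Sym ≤ κ)
    (φ : Fml (L.sum L₂) κ) (hφ : φ.freeVars = ∅)
    (F : Set (Fml L κ)) (hF : IsFragment κ F) :
    KAnalyticIn κ (cantF κ F) (iF κ F '' ModPsi L₂ φ) :=
  stmt_16_general κ hκκ L hL L₂ hL₂ φ F hF
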